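/- arXiv:math/0510563 — 5 statements merged into one kernel-verified Lean document; each statement's English description precedes it below -/
import Mathlib

section
/- Let (X,ρ,W) be a hyperbolic space, C ⊆ X nonempty convex, (M,d) a metric space, T : (C × M)_∞ → (C × M)_∞ nonexpansive, δ : M → C a nonexpansive selection function, and (λ_n) a sequence in [0,1]. For u ∈ M let T_u(x) = P_1(T(x,u)) and let (δ(u))_n denote the Krasnoselski-Mann iteration of T_u starting at δ(u). Define for each n ≥ 0 the map φ_n : M → M by φ_n(u) = P_2(T((δ(u))_n, u)). Then each φ_n is nonexpansive. -/
/-!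
Since `T` is nonexpansive for the maximum metric, the maps `T_u` and `T_v` send points at distance
at most `d(u, v)` to points at distance at most `d(u, v)`, and by (W4) so does one Krasnoselski-Mann
step. Starting from `δ(u)`, `δ(v)`, which are at distance at most `d(u, v)`, every pair of iterates
stays within `d(u, v)`; one more application of `T` then bounds the second coordinates.
-/

open Metric Set

/-- Krasnoselski-Mann iteration: x₀ := x, x_{n+1} := W(x_n, T(x_n), λ_n). -/
def KM {X : Type*} (W : X → X → ℝ → X) (T : X → X) (lam : ℕ → ℝ) (x : X) : ℕ → X
  | 0 => x
  | n + 1 => W (KM W T lam x n) (T (KM W T lam x n)) (lam n)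

section KrasnoselskiMann

variable {X : Type*} (W : X → X → ℝ → X) {lam : ℕ → ℝ}

theorem KM_mem {C : Set X}
    (hconv : ∀ x ∈ C, ∀ y ∈ C, ∀ l ∈ Icc (0:ℝ) 1, W x y l ∈ C)
    (hlam : ∀ n, lam n ∈ Icc (0:ℝ) 1) {T : X → X} (hT : MapsTo T C C) {x : X} (hx : x ∈ C) :
    ∀ n, KM W T lam x n ∈ C
  | 0 => hx
  | n + 1 => hconv _ (KM_mem hconv hlam hT hx n) _ (hT (KM_mem hconv hlam hT hx n)) _ (hlam n)

variable [PseudoMetricSpace X]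

theorem dist_W_le_of_le
    (hW4 : ∀ x y z w : X, ∀ l ∈ Icc (0:ℝ) 1,
      dist (W x z l) (W y w l) ≤ (1 - l) * dist x y + l * dist z w)
    {x y z w : X} {l r : ℝ} (hl : l ∈ Icc (0:ℝ) 1) (hxy : dist x y ≤ r) (hzw : dist z w ≤ r) :
    dist (W x z l) (W y w l) ≤ r :=
  calc dist (W x z l) (W y w l) ≤ (1 - l) * dist x y + l * dist z w := hW4 x y z w l hl
    _ ≤ (1 - l) * r + l * r := by gcongr <;> linarith [hl.1, hl.2]
    _ = r := by ring

theorem dist_KM_le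
    (hW4 : ∀ x y z w : X, ∀ l ∈ Icc (0:ℝ) 1,
      dist (W x z l) (W y w l) ≤ (1 - l) * dist x y + l * dist z w)
    {C : Set X} (hconv : ∀ x ∈ C, ∀ y ∈ C, ∀ l ∈ Icc (0:ℝ) 1, W x y l ∈ C)
    (hlam : ∀ n, lam n ∈ Icc (0:ℝ) 1) {T S : X → X} (hT : MapsTo T C C) (hS : MapsTo S C C)
    {r : ℝ} (hTS : ∀ a ∈ C, ∀ b ∈ C, dist a b ≤ r → dist (T a) (S b) ≤ r)
    {x y : X} (hx : x ∈ C) (hy : y ∈ C) (hxy : dist x y ≤ r) :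
    ∀ n, dist (KM W T lam x n) (KM W S lam y n) ≤ r
  | 0 => hxy
  | n + 1 =>
    have ih := dist_KM_le hW4 hconv hlam hT hS hTS hx hy hxy n
    dist_W_le_of_le W hW4 (hlam n) ih
      (hTS _ (KM_mem W hconv hlam hT hx n) _ (KM_mem W hconv hlam hS hy n) ih)

end KrasnoselskiMann

theorem dist_apply_le_of_le_of_dist_le {X M : Type*} [PseudoMetricSpace X] [PseudoMetricSpace M]
    {C : Set X} {T : X × M → X × M}
    (hTne : ∀ p q : X × M, p.1 ∈ C → q.1 ∈ C → dist (T p) (T q) ≤ dist p q)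
    {x y : X} (hx : x ∈ C) (hy : y ∈ C) {u v : M} (hxy : dist x y ≤ dist u v) :
    dist (T (x, u)) (T (y, v)) ≤ dist u v :=
  calc dist (T (x, u)) (T (y, v)) ≤ max (dist x y) (dist u v) := hTne (x, u) (y, v) hx hy
    _ = dist u v := max_eq_right hxy

theorem phi_n_nonexpansive_general {X M : Type*} [MetricSpace X] [MetricSpace M] (W : X → X → ℝ → X)
    (hW4 : ∀ x y z w : X, ∀ l ∈ Set.Icc (0:ℝ) 1,
      dist (W x z l) (W y w l) ≤ (1 - l) * dist x y + l * dist z w)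
    (C : Set X)
    (hconv : ∀ x ∈ C, ∀ y ∈ C, ∀ l ∈ Set.Icc (0:ℝ) 1, W x y l ∈ C)
    (T : X × M → X × M)
    (hT1 : ∀ x ∈ C, ∀ u : M, (T (x, u)).1 ∈ C)
    (hTne : ∀ p q : X × M, p.1 ∈ C → q.1 ∈ C → dist (T p) (T q) ≤ dist p q)
    (δ : M → X) (hδC : ∀ u, δ u ∈ C)
    (hδne : ∀ u v : M, dist (δ u) (δ v) ≤ dist u v)
    (lam : ℕ → ℝ) (hlam : ∀ n, lam n ∈ Set.Icc (0:ℝ) 1) :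
    ∀ (n : ℕ) (u v : M),
      dist (T (KM W (fun z => (T (z, u)).1) lam (δ u) n, u)).2
           (T (KM W (fun z => (T (z, v)).1) lam (δ v) n, v)).2 ≤ dist u v := by
  intro n u v
  have hTC : ∀ w : M, MapsTo (fun z => (T (z, w)).1) C C := fun w x hx => hT1 x hx w
  have hiter := dist_KM_le W hW4 hconv hlam (hTC u) (hTC v)
    (fun a ha b hb hab => (le_max_left _ _).trans
      (dist_apply_le_of_le_of_dist_le hTne ha hb hab))
    (hδC u) (hδC v) (hδne u v) n
  exact (le_max_right _ _).trans (dist_apply_le_of_le_of_dist_le hTne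
    (KM_mem W hconv hlam (hTC u) (hδC u) n) (KM_mem W hconv hlam (hTC v) (hδC v) n) hiter)

/-- Each map φ_n(u) = P₂(T((δ(u))_n, u)) is nonexpansive. -/
theorem phi_n_nonexpansive {X M : Type*} [MetricSpace X] [MetricSpace M] (W : X → X → ℝ → X)
    (hW1 : ∀ x y z : X, ∀ l ∈ Set.Icc (0:ℝ) 1,
      dist z (W x y l) ≤ (1 - l) * dist z x + l * dist z y)
    (hW2 : ∀ x y : X, ∀ l ∈ Set.Icc (0:ℝ) 1, ∀ l' ∈ Set.Icc (0:ℝ) 1,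
      dist (W x y l) (W x y l') = |l - l'| * dist x y)
    (hW3 : ∀ x y : X, ∀ l ∈ Set.Icc (0:ℝ) 1, W x y l = W y x (1 - l))
    (hW4 : ∀ x y z w : X, ∀ l ∈ Set.Icc (0:ℝ) 1,
      dist (W x z l) (W y w l) ≤ (1 - l) * dist x y + l * dist z w)
    (C : Set X) (hC : C.Nonempty)
    (hconv : ∀ x ∈ C, ∀ y ∈ C, ∀ l ∈ Set.Icc (0:ℝ) 1, W x y l ∈ C)
    (T : X × M → X × M)
    (hT1 : ∀ x ∈ C, ∀ u : M, (T (x, u)).1 ∈ C)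
    (hTne : ∀ p q : X × M, p.1 ∈ C → q.1 ∈ C → dist (T p) (T q) ≤ dist p q)
    (δ : M → X) (hδC : ∀ u, δ u ∈ C)
    (hδne : ∀ u v : M, dist (δ u) (δ v) ≤ dist u v)
    (lam : ℕ → ℝ) (hlam : ∀ n, lam n ∈ Set.Icc (0:ℝ) 1) :
    ∀ (n : ℕ) (u v : M),
      dist (T (KM W (fun z => (T (z, u)).1) lam (δ u) n, u)).2
           (T (KM W (fun z => (T (z, v)).1) lam (δ v) n, v)).2 ≤ dist u v :=
  phi_n_nonexpansive_general W hW4 C hconv T hT1 hTne δ hδC hδne lam hlam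
end

section
/- Let (X,ρ,W) be a hyperbolic space, C ⊆ X nonempty convex, (M,d) a metric space with the approximate fixed point property for nonexpansive mappings, T : (C × M)_∞ → (C × M)_∞ nonexpansive, δ : M → C nonexpansive, and (λ_n) a sequence in [0,1]. Then there exists a sequence (z_n) in M such that for all n ≥ 1: d(z_n, φ_n(z_n)) ≤ 1/n, where φ_n(u) = P_2(T((δ(u))_n, u)), and consequently d_∞(((δ(z_n))_n, z_n), T((δ(z_n))_n, z_n)) ≤ max{ρ((δ(z_n))_n, T_{z_n}((δ(z_n))_n)), 1/n}. -/
open Metric Set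

/-- M has the approximate fixed point property for nonexpansive mappings. -/
def AFPP (M : Type*) [MetricSpace M] : Prop :=
  ∀ S : M → M, (∀ u v : M, dist (S u) (S v) ≤ dist u v) →
    sInf {r : ℝ | ∃ u : M, r = dist u (S u)} = 0

/-- Existence of approximate fixed point sequence (z_n) for the maps φ_n. -/
theorem exists_zn_sequence {X M : Type*} [MetricSpace X] [MetricSpace M] [Nonempty M]
    (W : X → X → ℝ → X)
    (hW1 : ∀ x y z : X, ∀ l ∈ Set.Icc (0:ℝ) 1,
      dist z (W x y l) ≤ (1 - l) * dist z x + l * dist z y)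
    (hW2 : ∀ x y : X, ∀ l ∈ Set.Icc (0:ℝ) 1, ∀ l' ∈ Set.Icc (0:ℝ) 1,
      dist (W x y l) (W x y l') = |l - l'| * dist x y)
    (hW3 : ∀ x y : X, ∀ l ∈ Set.Icc (0:ℝ) 1, W x y l = W y x (1 - l))
    (hW4 : ∀ x y z w : X, ∀ l ∈ Set.Icc (0:ℝ) 1,
      dist (W x z l) (W y w l) ≤ (1 - l) * dist x y + l * dist z w)
    (C : Set X) (hC : C.Nonempty)
    (hconv : ∀ x ∈ C, ∀ y ∈ C, ∀ l ∈ Set.Icc (0:ℝ) 1, W x y l ∈ C)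
    (hM : AFPP M)
    (T : X × M → X × M)
    (hT1 : ∀ x ∈ C, ∀ u : M, (T (x, u)).1 ∈ C)
    (hTne : ∀ p q : X × M, p.1 ∈ C → q.1 ∈ C → dist (T p) (T q) ≤ dist p q)
    (δ : M → X) (hδC : ∀ u, δ u ∈ C)
    (hδne : ∀ u v : M, dist (δ u) (δ v) ≤ dist u v)
    (lam : ℕ → ℝ) (hlam : ∀ n, lam n ∈ Set.Icc (0:ℝ) 1) :
    ∃ z : ℕ → M, ∀ n : ℕ, 1 ≤ n →
      dist (z n) (T (KM W (fun x => (T (x, z n)).1) lam (δ (z n)) n, z n)).2 ≤ 1 / n ∧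
      dist (KM W (fun x => (T (x, z n)).1) lam (δ (z n)) n, z n)
           (T (KM W (fun x => (T (x, z n)).1) lam (δ (z n)) n, z n))
        ≤ max (dist (KM W (fun x => (T (x, z n)).1) lam (δ (z n)) n)
                   (T (KM W (fun x => (T (x, z n)).1) lam (δ (z n)) n, z n)).1)
              (1 / n) := by
  -- KM iterates stay in C
  have hKMC : ∀ (u : M) (n : ℕ), KM W (fun x => (T (x, u)).1) lam (δ u) n ∈ C := by
    intro u n
    induction n with
    | zero => exact hδC u
    | succ n ih => exact hconv _ ih _ (hT1 _ ih u) _ (hlam n)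
  -- KM is nonexpansive in u
  have hKMdist : ∀ (u v : M) (n : ℕ),
      dist (KM W (fun x => (T (x, u)).1) lam (δ u) n)
        (KM W (fun x => (T (x, v)).1) lam (δ v) n) ≤ dist u v := by
    intro u v n
    induction n with
    | zero => exact hδne u v
    | succ n ih =>
      set a := KM W (fun x => (T (x, u)).1) lam (δ u) n with ha
      set b := KM W (fun x => (T (x, v)).1) lam (δ v) n with hb
      have hl := hlam n
      have h1 : dist (T (a, u)).1 (T (b, v)).1 ≤ dist u v := by
        have h2 : dist (T (a, u)).1 (T (b, v)).1 ≤ dist (T (a, u)) (T (b, v)) := by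
          rw [Prod.dist_eq]; exact le_max_left _ _
        have h3 : dist (T (a, u)) (T (b, v)) ≤ dist ((a, u) : X × M) (b, v) :=
          hTne _ _ (hKMC u n) (hKMC v n)
        have h4 : dist ((a, u) : X × M) (b, v) ≤ dist u v := by
          rw [Prod.dist_eq]; exact max_le ih le_rfl
        linarith
      calc dist (W a (T (a, u)).1 (lam n)) (W b (T (b, v)).1 (lam n))
          ≤ (1 - lam n) * dist a b + lam n * dist (T (a, u)).1 (T (b, v)).1 :=
            hW4 _ _ _ _ _ hl
        _ ≤ (1 - lam n) * dist u v + lam n * dist u v := by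
            have := hl.1; have := hl.2
            have h5 : (0:ℝ) ≤ 1 - lam n := by linarith
            exact add_le_add (mul_le_mul_of_nonneg_left ih h5)
              (mul_le_mul_of_nonneg_left h1 hl.1)
        _ = dist u v := by ring
  -- φ n is nonexpansive
  have hφne : ∀ n : ℕ, ∀ u v : M,
      dist (T (KM W (fun x => (T (x, u)).1) lam (δ u) n, u)).2
        (T (KM W (fun x => (T (x, v)).1) lam (δ v) n, v)).2 ≤ dist u v := by
    intro n u v
    set a := KM W (fun x => (T (x, u)).1) lam (δ u) n
    set b := KM W (fun x => (T (x, v)).1) lam (δ v) n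
    have h2 : dist (T (a, u)).2 (T (b, v)).2 ≤ dist (T (a, u)) (T (b, v)) := by
      rw [Prod.dist_eq]; exact le_max_right _ _
    have h3 : dist (T (a, u)) (T (b, v)) ≤ dist ((a, u) : X × M) (b, v) :=
      hTne _ _ (hKMC u n) (hKMC v n)
    have h4 : dist ((a, u) : X × M) (b, v) ≤ dist u v := by
      rw [Prod.dist_eq]; exact max_le (hKMdist u v n) le_rfl
    linarith
  -- for each n ≥ 1, get an approximate fixed point
  have hex : ∀ n : ℕ, 1 ≤ n → ∃ u : M,
      dist u (T (KM W (fun x => (T (x, u)).1) lam (δ u) n, u)).2 ≤ 1 / n := by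
    intro n hn
    set φ : M → M := fun u => (T (KM W (fun x => (T (x, u)).1) lam (δ u) n, u)).2 with hφ
    have hinf := hM φ (hφne n)
    have hS : {r : ℝ | ∃ u : M, r = dist u (φ u)}.Nonempty := by
      obtain ⟨u⟩ := ‹Nonempty M›
      exact ⟨dist u (φ u), u, rfl⟩
    have hpos : (0:ℝ) < 1 / n := by positivity
    have : sInf {r : ℝ | ∃ u : M, r = dist u (φ u)} < 1 / n := by
      rw [hinf]; exact hpos
    obtain ⟨r, ⟨u, hu⟩, hr⟩ := exists_lt_of_csInf_lt hS this
    exact ⟨u, by rw [← hu] at *; linarith [hu ▸ hr]⟩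
  classical
  refine ⟨fun n => if h : 1 ≤ n then (hex n h).choose else Classical.arbitrary M, ?_⟩
  intro n hn
  simp only [dif_pos hn]
  have h1 := (hex n hn).choose_spec
  refine ⟨h1, ?_⟩
  rw [Prod.dist_eq]
  exact max_le_max le_rfl h1
end

section
/- Let (X,ρ,W) be a hyperbolic space, C ⊆ X nonempty convex, (M,d) a metric space with the AFPP for nonexpansive mappings, δ : M → C nonexpansive, and T : (C × M)_∞ → (C × M)_∞ nonexpansive. Suppose sup_{u∈M} r_C(T_u) < ∞ where r_C(T_u) = inf{ρ(x, T_u(x)) : x ∈ C}, and suppose there is φ : (0,∞) → (0,∞) such that for each ε > 0 and v ∈ M there is x* ∈ C with ρ(δ(v), x*) ≤ φ(ε) and ρ(x*, T_v(x*)) ≤ sup_{u∈M} r_C(T_u) + ε. Then r_H(T) ≤ sup_{u∈M} r_C(T_u), where H = (C × M)_∞ and r_H(T) = inf{d_∞(h, T(h)) : h ∈ H}. -/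
open Metric Set

open Filter Topology

/-!
For `t ∈ [0, 1)` and `u ∈ M`, the anchored map `x ↦ W (δ u) (T_u x) t` is a `t`-contraction of
`C`, so its `n`-th iterate `z u` starting at `δ u` is an approximate fixed point of it. Comparing
`z u` with the point `x*` supplied by `φ` shows that the displacement of `T_u` at `z u` exceeds
`sup r_C` by at most `O(tⁿ) + O((1 - t) φ(ε)) + ε`, uniformly in `u`. By (W4), `u ↦ z u` is
nonexpansive, hence so is `u ↦ P₂ (T (z u, u))`, and the AFPP of `M` produces `u` with small
displacement in the second coordinate as well.
-/

theorem exists_mem_Ico_pow_mul_add_le (K : ℝ) {D ε : ℝ} (hD : 0 ≤ D) (hε : 0 < ε) :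
    ∃ t ∈ Ico (0:ℝ) 1, ∃ n : ℕ, 2 * t ^ n * K + 2 * (1 - t) * D ≤ ε := by
  set t := 4 * D / (4 * D + ε)
  have ht : t ∈ Ico (0:ℝ) 1 := ⟨by positivity, (div_lt_one (by positivity)).2 (by linarith)⟩
  have htD : 2 * (1 - t) * D ≤ ε / 2 := by
    rw [one_sub_div (by positivity), add_sub_cancel_left, mul_div_assoc', div_mul_eq_mul_div,
      div_le_div_iff₀ (by positivity) two_pos]
    nlinarith
  have hlim := (tendsto_pow_atTop_nhds_zero_of_lt_one ht.1 ht.2).const_mul (2 * K)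
  rw [mul_zero] at hlim
  obtain ⟨n, hn⟩ := (hlim.eventually (ge_mem_nhds (half_pos hε))).exists
  exact ⟨t, ht, n, by linarith⟩

theorem dist_iterate_succ_le_pow_mul {X : Type*} [PseudoMetricSpace X] {C : Set X} {F : X → X}
    {t : ℝ} (hFC : MapsTo F C C)
    (hF : ∀ x ∈ C, ∀ y ∈ C, dist (F x) (F y) ≤ t * dist x y) (ht : 0 ≤ t) {x : X}
    (hx : x ∈ C) (n : ℕ) : dist (F^[n] x) (F^[n + 1] x) ≤ t ^ n * dist x (F x) := by
  induction n with
  | zero => simp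
  | succ n ih =>
    have hcontr := hF _ (hFC.iterate n hx) _ (hFC.iterate (n + 1) hx)
    rw [← Function.iterate_succ_apply' F n, ← Function.iterate_succ_apply' F (n + 1)] at hcontr
    calc dist (F^[n + 1] x) (F^[n + 1 + 1] x)
        ≤ t * dist (F^[n] x) (F^[n + 1] x) := hcontr
      _ ≤ t * (t ^ n * dist x (F x)) := by gcongr
      _ = t ^ (n + 1) * dist x (F x) := by ring

section Hyperbolic

variable {X : Type*} {W : X → X → ℝ → X} {C : Set X} {a : X} {f : X → X} {t : ℝ}

def halpernMap (W : X → X → ℝ → X) (a : X) (f : X → X) (t : ℝ) (x : X) : X :=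
  W a (f x) t

theorem mapsTo_halpernMap
    (hconv : ∀ x ∈ C, ∀ y ∈ C, ∀ l ∈ Icc (0:ℝ) 1, W x y l ∈ C)
    (ha : a ∈ C) (hfC : MapsTo f C C) (ht : t ∈ Icc (0:ℝ) 1) :
    MapsTo (halpernMap W a f t) C C :=
  fun _ hx => hconv a ha _ (hfC hx) t ht

variable [PseudoMetricSpace X] {l : ℝ}

theorem dist_W_left_le
    (hW1 : ∀ x y z : X, ∀ l ∈ Icc (0:ℝ) 1,
      dist z (W x y l) ≤ (1 - l) * dist z x + l * dist z y)
    (hl : l ∈ Icc (0:ℝ) 1) (x y : X) : dist x (W x y l) ≤ l * dist x y := by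
  simpa using hW1 x y x l hl

theorem dist_W_right_le
    (hW1 : ∀ x y z : X, ∀ l ∈ Icc (0:ℝ) 1,
      dist z (W x y l) ≤ (1 - l) * dist z x + l * dist z y)
    (hl : l ∈ Icc (0:ℝ) 1) (x y : X) : dist (W x y l) y ≤ (1 - l) * dist x y := by
  simpa [dist_comm] using hW1 x y y l hl

theorem dist_halpernMap_le
    (hW4 : ∀ x y z w : X, ∀ l ∈ Icc (0:ℝ) 1,
      dist (W x z l) (W y w l) ≤ (1 - l) * dist x y + l * dist z w)
    (hf : ∀ x ∈ C, ∀ y ∈ C, dist (f x) (f y) ≤ dist x y) (ht : t ∈ Icc (0:ℝ) 1)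
    {x y : X} (hx : x ∈ C) (hy : y ∈ C) :
    dist (halpernMap W a f t x) (halpernMap W a f t y) ≤ t * dist x y :=
  calc dist (W a (f x) t) (W a (f y) t) ≤ t * dist (f x) (f y) := by
        simpa using hW4 a a (f x) (f y) t ht
    _ ≤ t * dist x y := mul_le_mul_of_nonneg_left (hf x hx y hy) ht.1

theorem dist_apply_le_of_halpernMap
    (hW1 : ∀ x y z : X, ∀ l ∈ Icc (0:ℝ) 1,
      dist z (W x y l) ≤ (1 - l) * dist z x + l * dist z y)
    (hW4 : ∀ x y z w : X, ∀ l ∈ Icc (0:ℝ) 1,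
      dist (W x z l) (W y w l) ≤ (1 - l) * dist x y + l * dist z w)
    (hf : ∀ x ∈ C, ∀ y ∈ C, dist (f x) (f y) ≤ dist x y) (ht : t ∈ Icc (0:ℝ) 1)
    {z xs : X} (hz : z ∈ C) (hxs : xs ∈ C) :
    dist z (f z) ≤ 2 * dist z (halpernMap W a f t z) + 2 * (1 - t) * dist a xs
      + dist xs (f xs) := by
  set F := halpernMap W a f t
  have hz_fz : dist z (f z) ≤ dist z (F z) + (1 - t) * dist a (f z) :=
    (dist_triangle _ _ _).trans (add_le_add le_rfl (dist_W_right_le hW1 ht a (f z)))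
  have ha_fz : dist a (f z) ≤ dist a xs + dist xs (f xs) + dist z xs :=
    (dist_triangle4 a xs (f xs) (f z)).trans (by linarith [hf xs hxs z hz, dist_comm xs z])
  have hxs_Fxs : dist xs (F xs) ≤ (1 - t) * dist a xs + t * dist xs (f xs) := by
    have := hW1 a (f xs) xs t ht
    rwa [dist_comm xs a] at this
  -- As `F` is a `t`-contraction, this bounds `(1 - t) * dist z xs`.
  have hz_xs : dist z xs ≤ dist z (F z) + t * dist z xs + dist xs (F xs) :=
    (dist_triangle4 z (F z) (F xs) xs).trans (by
      rw [dist_comm (F xs)]; gcongr; exact dist_halpernMap_le hW4 hf ht hz hxs)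
  have h1t : 0 ≤ 1 - t := sub_nonneg.2 ht.2
  nlinarith [mul_le_mul_of_nonneg_left ha_fz h1t]

theorem dist_iterate_halpernMap_apply_le
    (hW1 : ∀ x y z : X, ∀ l ∈ Icc (0:ℝ) 1,
      dist z (W x y l) ≤ (1 - l) * dist z x + l * dist z y)
    (hW4 : ∀ x y z w : X, ∀ l ∈ Icc (0:ℝ) 1,
      dist (W x z l) (W y w l) ≤ (1 - l) * dist x y + l * dist z w)
    (hconv : ∀ x ∈ C, ∀ y ∈ C, ∀ l ∈ Icc (0:ℝ) 1, W x y l ∈ C)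
    (ha : a ∈ C) (hfC : MapsTo f C C) (hf : ∀ x ∈ C, ∀ y ∈ C, dist (f x) (f y) ≤ dist x y)
    (ht : t ∈ Icc (0:ℝ) 1) {xs : X} (hxs : xs ∈ C) (n : ℕ) :
    dist ((halpernMap W a f t)^[n] a) (f ((halpernMap W a f t)^[n] a))
      ≤ 2 * t ^ n * (2 * dist a xs + dist xs (f xs)) + 2 * (1 - t) * dist a xs
        + dist xs (f xs) := by
  set F := halpernMap W a f t
  have hFC : MapsTo F C C := mapsTo_halpernMap hconv ha hfC ht
  have ha_Fa : dist a (F a) ≤ 2 * dist a xs + dist xs (f xs) :=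
    calc dist a (F a) ≤ t * dist a (f a) := dist_W_left_le hW1 ht a (f a)
      _ ≤ dist a (f a) := mul_le_of_le_one_left dist_nonneg ht.2
      _ ≤ dist a xs + dist xs (f xs) + dist (f xs) (f a) := dist_triangle4 _ _ _ _
      _ ≤ 2 * dist a xs + dist xs (f xs) := by
        linarith [hf xs hxs a ha, dist_comm xs a]
  have hstep : dist (F^[n] a) (F^[n + 1] a) ≤ t ^ n * (2 * dist a xs + dist xs (f xs)) :=
    (dist_iterate_succ_le_pow_mul hFC (fun x hx y hy => dist_halpernMap_le hW4 hf ht hx hy)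
      ht.1 ha n).trans (mul_le_mul_of_nonneg_left ha_Fa (pow_nonneg ht.1 n))
  rw [Function.iterate_succ_apply'] at hstep
  linarith [dist_apply_le_of_halpernMap hW1 hW4 hf ht (hFC.iterate n ha) hxs (a := a)]

end Hyperbolic

theorem AFPP.exists_dist_lt {M : Type*} [MetricSpace M] [Nonempty M] (hM : AFPP M)
    {S : M → M} (hS : ∀ u v : M, dist (S u) (S v) ≤ dist u v) {ε : ℝ} (hε : 0 < ε) :
    ∃ u, dist u (S u) < ε := by
  obtain ⟨_, ⟨u, rfl⟩, hu⟩ := exists_lt_of_csInf_lt (s := {r : ℝ | ∃ u : M, r = dist u (S u)})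
    ⟨_, Classical.arbitrary M, rfl⟩
    ((hM S hS).trans_lt hε)
  exact ⟨u, hu⟩

section Product

variable {X M : Type*} [PseudoMetricSpace X] [MetricSpace M] {W : X → X → ℝ → X} {C : Set X}
  {δ : M → X} {T : X × M → X × M} {t : ℝ}

theorem dist_fst_apply_le
    (hTne : ∀ p q : X × M, p.1 ∈ C → q.1 ∈ C → dist (T p) (T q) ≤ dist p q)
    {x y : X} (hx : x ∈ C) (hy : y ∈ C) (u v : M) :
    dist (T (x, u)).1 (T (y, v)).1 ≤ max (dist x y) (dist u v) :=
  (le_max_left _ _).trans (hTne (x, u) (y, v) hx hy)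

theorem dist_snd_apply_le
    (hTne : ∀ p q : X × M, p.1 ∈ C → q.1 ∈ C → dist (T p) (T q) ≤ dist p q)
    {x y : X} (hx : x ∈ C) (hy : y ∈ C) (u v : M) :
    dist (T (x, u)).2 (T (y, v)).2 ≤ max (dist x y) (dist u v) :=
  (le_max_right _ _).trans (hTne (x, u) (y, v) hx hy)

theorem dist_iterate_halpernMap_le_dist
    (hW4 : ∀ x y z w : X, ∀ l ∈ Icc (0:ℝ) 1,
      dist (W x z l) (W y w l) ≤ (1 - l) * dist x y + l * dist z w)
    (hconv : ∀ x ∈ C, ∀ y ∈ C, ∀ l ∈ Icc (0:ℝ) 1, W x y l ∈ C)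
    (hδC : ∀ u, δ u ∈ C) (hδne : ∀ u v : M, dist (δ u) (δ v) ≤ dist u v)
    (hT1 : ∀ x ∈ C, ∀ u : M, (T (x, u)).1 ∈ C)
    (hTne : ∀ p q : X × M, p.1 ∈ C → q.1 ∈ C → dist (T p) (T q) ≤ dist p q)
    (ht : t ∈ Icc (0:ℝ) 1) (u v : M) (n : ℕ) :
    dist ((halpernMap W (δ u) (fun x => (T (x, u)).1) t)^[n] (δ u))
      ((halpernMap W (δ v) (fun x => (T (x, v)).1) t)^[n] (δ v)) ≤ dist u v := by
  induction n with
  | zero => exact hδne u v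
  | succ n ih =>
    set x := (halpernMap W (δ u) (fun x => (T (x, u)).1) t)^[n] (δ u)
    set y := (halpernMap W (δ v) (fun x => (T (x, v)).1) t)^[n] (δ v)
    have hx : x ∈ C := (mapsTo_halpernMap hconv (hδC u) (fun x hx => hT1 x hx u) ht).iterate n
      (hδC u)
    have hy : y ∈ C := (mapsTo_halpernMap hconv (hδC v) (fun x hx => hT1 x hx v) ht).iterate n
      (hδC v)
    have hTxy : dist (T (x, u)).1 (T (y, v)).1 ≤ dist u v :=
      (dist_fst_apply_le hTne hx hy u v).trans_eq (max_eq_right ih)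
    rw [Function.iterate_succ_apply', Function.iterate_succ_apply']
    calc dist (W (δ u) (T (x, u)).1 t) (W (δ v) (T (y, v)).1 t)
        ≤ (1 - t) * dist (δ u) (δ v) + t * dist (T (x, u)).1 (T (y, v)).1 :=
          hW4 _ _ _ _ t ht
      _ ≤ (1 - t) * dist u v + t * dist u v := by
        gcongr
        · exact sub_nonneg.2 ht.2
        · exact hδne u v
        · exact ht.1
      _ = dist u v := by ring

theorem exists_mem_dist_apply_le_add [Nonempty M]
    (hW1 : ∀ x y z : X, ∀ l ∈ Icc (0:ℝ) 1,
      dist z (W x y l) ≤ (1 - l) * dist z x + l * dist z y)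
    (hW4 : ∀ x y z w : X, ∀ l ∈ Icc (0:ℝ) 1,
      dist (W x z l) (W y w l) ≤ (1 - l) * dist x y + l * dist z w)
    (hconv : ∀ x ∈ C, ∀ y ∈ C, ∀ l ∈ Icc (0:ℝ) 1, W x y l ∈ C)
    (hM : AFPP M) (hδC : ∀ u, δ u ∈ C) (hδne : ∀ u v : M, dist (δ u) (δ v) ≤ dist u v)
    (hT1 : ∀ x ∈ C, ∀ u : M, (T (x, u)).1 ∈ C)
    (hTne : ∀ p q : X × M, p.1 ∈ C → q.1 ∈ C → dist (T p) (T q) ≤ dist p q)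
    {D R : ℝ} (happrox : ∀ v, ∃ x ∈ C, dist (δ v) x ≤ D ∧ dist x (T (x, v)).1 ≤ R)
    {ε : ℝ} (hε : 0 < ε) :
    ∃ x ∈ C, ∃ u, dist (x, u) (T (x, u)) ≤ R + ε := by
  obtain ⟨x₀, -, hx₀D, hx₀R⟩ := happrox (Classical.arbitrary M)
  have hD : 0 ≤ D := dist_nonneg.trans hx₀D
  have hR : 0 ≤ R := dist_nonneg.trans hx₀R
  obtain ⟨t, ht, n, htn⟩ := exists_mem_Ico_pow_mul_add_le (2 * D + R) hD hε
  have htI : t ∈ Icc (0:ℝ) 1 := Ico_subset_Icc_self ht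
  set z : M → X := fun u => (halpernMap W (δ u) (fun x => (T (x, u)).1) t)^[n] (δ u)
  have hzC : ∀ u, z u ∈ C := fun u =>
    (mapsTo_halpernMap hconv (hδC u) (fun x hx => hT1 x hx u) htI).iterate n (hδC u)
  have hdisp : ∀ u, dist (z u) (T (z u, u)).1 ≤ R + ε := by
    intro u
    obtain ⟨xs, hxsC, hxsD, hxsR⟩ := happrox u
    have hslice : ∀ x ∈ C, ∀ y ∈ C, dist (T (x, u)).1 (T (y, u)).1 ≤ dist x y := fun x hx y hy =>
      by simpa using dist_fst_apply_le hTne hx hy u u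
    calc dist (z u) (T (z u, u)).1
        ≤ 2 * t ^ n * (2 * dist (δ u) xs + dist xs (T (xs, u)).1)
          + 2 * (1 - t) * dist (δ u) xs + dist xs (T (xs, u)).1 :=
          dist_iterate_halpernMap_apply_le hW1 hW4 hconv (hδC u) (fun x hx => hT1 x hx u) hslice
            htI hxsC n
      _ ≤ 2 * t ^ n * (2 * D + R) + 2 * (1 - t) * D + R := by
          have : 0 ≤ 1 - t := sub_nonneg.2 htI.2
          have : 0 ≤ t ^ n := pow_nonneg ht.1 n
          gcongr
      _ ≤ R + ε := by linarith
  have hS : ∀ u v, dist (T (z u, u)).2 (T (z v, v)).2 ≤ dist u v := fun u v =>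
    (dist_snd_apply_le hTne (hzC u) (hzC v) u v).trans_eq
      (max_eq_right (dist_iterate_halpernMap_le_dist hW4 hconv hδC hδne hT1 hTne htI u v n))
  obtain ⟨u, hu⟩ := hM.exists_dist_lt hS hε
  exact ⟨z u, hzC u, u, max_le (hdisp u) (hu.le.trans (by linarith))⟩

end Product

theorem rH_le_sup_rC_general {X M : Type*} [MetricSpace X] [MetricSpace M] [Nonempty M]
    (W : X → X → ℝ → X)
    (hW1 : ∀ x y z : X, ∀ l ∈ Set.Icc (0:ℝ) 1,
      dist z (W x y l) ≤ (1 - l) * dist z x + l * dist z y)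
    (hW4 : ∀ x y z w : X, ∀ l ∈ Set.Icc (0:ℝ) 1,
      dist (W x z l) (W y w l) ≤ (1 - l) * dist x y + l * dist z w)
    (C : Set X)
    (hconv : ∀ x ∈ C, ∀ y ∈ C, ∀ l ∈ Set.Icc (0:ℝ) 1, W x y l ∈ C)
    (hM : AFPP M)
    (δ : M → X) (hδC : ∀ u, δ u ∈ C)
    (hδne : ∀ u v : M, dist (δ u) (δ v) ≤ dist u v)
    (T : X × M → X × M)
    (hT1 : ∀ x ∈ C, ∀ u : M, (T (x, u)).1 ∈ C)
    (hTne : ∀ p q : X × M, p.1 ∈ C → q.1 ∈ C → dist (T p) (T q) ≤ dist p q)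
    (rC : M → ℝ)
    (φ : ℝ → ℝ)
    (hφ : ∀ ε > (0:ℝ), ∀ v : M, ∃ xstar ∈ C,
      dist (δ v) xstar ≤ φ ε ∧ dist xstar (T (xstar, v)).1 ≤ sSup (Set.range rC) + ε) :
    sInf {r : ℝ | ∃ x ∈ C, ∃ u : M, r = dist (x, u) (T (x, u))} ≤ sSup (Set.range rC) := by
  have hbdd : BddBelow {r : ℝ | ∃ x ∈ C, ∃ u : M, r = dist (x, u) (T (x, u))} :=
    ⟨0, by rintro _ ⟨x, -, u, rfl⟩; exact dist_nonneg⟩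
  refine le_of_forall_pos_le_add fun ε hε => ?_
  obtain ⟨x, hx, u, hxu⟩ := exists_mem_dist_apply_le_add hW1 hW4 hconv hM hδC hδne hT1 hTne
    (hφ (ε / 2) (half_pos hε)) (half_pos hε)
  calc sInf {r : ℝ | ∃ x ∈ C, ∃ u : M, r = dist (x, u) (T (x, u))}
      ≤ dist (x, u) (T (x, u)) := csInf_le hbdd ⟨x, hx, u, rfl⟩
    _ ≤ sSup (Set.range rC) + ε / 2 + ε / 2 := hxu
    _ = sSup (Set.range rC) + ε := by ring

/-- r_H(T) ≤ sup_{u∈M} r_C(T_u). -/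
theorem rH_le_sup_rC {X M : Type*} [MetricSpace X] [MetricSpace M] [Nonempty M]
    (W : X → X → ℝ → X)
    (hW1 : ∀ x y z : X, ∀ l ∈ Set.Icc (0:ℝ) 1,
      dist z (W x y l) ≤ (1 - l) * dist z x + l * dist z y)
    (hW2 : ∀ x y : X, ∀ l ∈ Set.Icc (0:ℝ) 1, ∀ l' ∈ Set.Icc (0:ℝ) 1,
      dist (W x y l) (W x y l') = |l - l'| * dist x y)
    (hW3 : ∀ x y : X, ∀ l ∈ Set.Icc (0:ℝ) 1, W x y l = W y x (1 - l))
    (hW4 : ∀ x y z w : X, ∀ l ∈ Set.Icc (0:ℝ) 1,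
      dist (W x z l) (W y w l) ≤ (1 - l) * dist x y + l * dist z w)
    (C : Set X) (hC : C.Nonempty)
    (hconv : ∀ x ∈ C, ∀ y ∈ C, ∀ l ∈ Set.Icc (0:ℝ) 1, W x y l ∈ C)
    (hM : AFPP M)
    (δ : M → X) (hδC : ∀ u, δ u ∈ C)
    (hδne : ∀ u v : M, dist (δ u) (δ v) ≤ dist u v)
    (T : X × M → X × M)
    (hT1 : ∀ x ∈ C, ∀ u : M, (T (x, u)).1 ∈ C)
    (hTne : ∀ p q : X × M, p.1 ∈ C → q.1 ∈ C → dist (T p) (T q) ≤ dist p q)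
    (rC : M → ℝ)
    (hrC : ∀ u, rC u = sInf {r : ℝ | ∃ x ∈ C, r = dist x (T (x, u)).1})
    (hbdd : BddAbove (Set.range rC))
    (φ : ℝ → ℝ) (hφpos : ∀ ε > (0:ℝ), 0 < φ ε)
    (hφ : ∀ ε > (0:ℝ), ∀ v : M, ∃ xstar ∈ C,
      dist (δ v) xstar ≤ φ ε ∧ dist xstar (T (xstar, v)).1 ≤ sSup (Set.range rC) + ε) :
    sInf {r : ℝ | ∃ x ∈ C, ∃ u : M, r = dist (x, u) (T (x, u))} ≤ sSup (Set.range rC) :=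
  rH_le_sup_rC_general W hW1 hW4 C hconv hM δ hδC hδne T hT1 hTne rC φ hφ
end

section
/- Let (X,ρ,W) be a hyperbolic space, C ⊆ X nonempty, convex, and bounded, and (M,d) a metric space with the approximate fixed point property for nonexpansive mappings. Then H := (C × M)_∞ has the approximate fixed point property for nonexpansive mappings: for every nonexpansive T : H → H, inf{d_∞(h, T(h)) : h ∈ H} = 0. -/
open Metric Set

/-- Auxiliary iteration: x₀ := p, x_{n+1} := W(p, (T(x_n, u)).1, t). -/
def auxSeq {X M : Type*} (W : X → X → ℝ → X) (T : X × M → X × M) (t : ℝ) (p : X) (u : M) :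
    ℕ → X
  | 0 => p
  | n + 1 => W p (T (auxSeq W T t p u n, u)).1 t

lemma dist_fst_le' {X M : Type*} [MetricSpace X] [MetricSpace M] (p q : X × M) :
    dist p.1 q.1 ≤ dist p q := by
  rw [Prod.dist_eq]; exact le_max_left _ _

lemma dist_snd_le' {X M : Type*} [MetricSpace X] [MetricSpace M] (p q : X × M) :
    dist p.2 q.2 ≤ dist p q := by
  rw [Prod.dist_eq]; exact le_max_right _ _

/-- If C is a nonempty bounded convex subset of a hyperbolic space and M has the AFPP,
then (C × M)_∞ has the AFPP for nonexpansive mappings. -/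
theorem product_AFPP_of_bounded {X M : Type*} [MetricSpace X] [MetricSpace M] [Nonempty M]
    (W : X → X → ℝ → X)
    (hW1 : ∀ x y z : X, ∀ l ∈ Set.Icc (0:ℝ) 1,
      dist z (W x y l) ≤ (1 - l) * dist z x + l * dist z y)
    (hW2 : ∀ x y : X, ∀ l ∈ Set.Icc (0:ℝ) 1, ∀ l' ∈ Set.Icc (0:ℝ) 1,
      dist (W x y l) (W x y l') = |l - l'| * dist x y)
    (hW3 : ∀ x y : X, ∀ l ∈ Set.Icc (0:ℝ) 1, W x y l = W y x (1 - l))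
    (hW4 : ∀ x y z w : X, ∀ l ∈ Set.Icc (0:ℝ) 1,
      dist (W x z l) (W y w l) ≤ (1 - l) * dist x y + l * dist z w)
    (C : Set X) (hC : C.Nonempty)
    (hconv : ∀ x ∈ C, ∀ y ∈ C, ∀ l ∈ Set.Icc (0:ℝ) 1, W x y l ∈ C)
    (hCbdd : Bornology.IsBounded C)
    (hM : AFPP M) :
    ∀ T : X × M → X × M,
      (∀ x ∈ C, ∀ u : M, (T (x, u)).1 ∈ C) →
      (∀ p q : X × M, p.1 ∈ C → q.1 ∈ C → dist (T p) (T q) ≤ dist p q) →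
      sInf {r : ℝ | ∃ x ∈ C, ∃ u : M, r = dist (x, u) (T (x, u))} = 0 := by
  intro T hT1 hT2
  obtain ⟨p, hp⟩ := hC
  obtain ⟨D, hD⟩ := Metric.isBounded_iff.mp hCbdd
  have hD0 : 0 ≤ D := le_trans (by simp) (hD hp hp)
  set A := {r : ℝ | ∃ x ∈ C, ∃ u : M, r = dist (x, u) (T (x, u))} with hA
  have hAne : A.Nonempty := ⟨_, p, hp, Classical.arbitrary M, rfl⟩
  have hAbd : ∀ r ∈ A, (0:ℝ) ≤ r := by
    rintro r ⟨x, hx, u, rfl⟩; exact dist_nonneg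
  have hbdd : BddBelow A := ⟨0, fun r hr => hAbd r hr⟩
  have key : ∀ ε > (0:ℝ), ∃ r ∈ A, r ≤ ε := by
    intro ε hε
    set δ := min (ε / (2 * (D + 1))) 1 with hδdef
    have hδpos : 0 < δ := lt_min (by positivity) one_pos
    have hδ1 : δ ≤ 1 := min_le_right _ _
    have hδle : δ ≤ ε / (2 * (D + 1)) := min_le_left _ _
    set t := 1 - δ with htdef
    have ht : t ∈ Set.Icc (0:ℝ) 1 := ⟨by simp only [htdef]; linarith, by simp only [htdef]; linarith⟩
    have ht0 : 0 ≤ t := ht.1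
    have ht1 : t < 1 := by simp only [htdef]; linarith
    set seq := auxSeq W T t p with hseq
    -- membership
    have memC : ∀ u n, seq u n ∈ C := by
      intro u n
      induction n with
      | zero => exact hp
      | succ n ih => exact hconv p hp _ (hT1 _ ih u) t ht
    -- nonexpansiveness in u
    have lip : ∀ n (u v : M), dist (seq u n) (seq v n) ≤ dist u v := by
      intro n
      induction n with
      | zero => intro u v; simp only [hseq, auxSeq, dist_self]; exact dist_nonneg
      | succ n ih =>
        intro u v
        have h1 : dist (seq u (n+1)) (seq v (n+1)) ≤
            (1 - t) * dist p p + t * dist (T (seq u n, u)).1 (T (seq v n, v)).1 :=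
          hW4 p p (T (seq u n, u)).1 (T (seq v n, v)).1 t ht
        have h2 : dist (T (seq u n, u)).1 (T (seq v n, v)).1 ≤
            dist (T (seq u n, u)) (T (seq v n, v)) := dist_fst_le' _ _
        have h3 : dist (T (seq u n, u)) (T (seq v n, v)) ≤ dist ((seq u n, u) : X × M) (seq v n, v) :=
          hT2 _ _ (memC u n) (memC v n)
        have h4 : dist ((seq u n, u) : X × M) (seq v n, v) ≤ dist u v := by
          rw [Prod.dist_eq]; exact max_le (ih u v) le_rfl
        have hduv : (0:ℝ) ≤ dist u v := dist_nonneg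
        simp only [dist_self, mul_zero, zero_add] at h1
        nlinarith
    -- successive distances
    have step : ∀ (u : M) (n : ℕ), dist (seq u n) (seq u (n+1)) ≤ t ^ n * D := by
      intro u n
      induction n with
      | zero =>
        have h1 : dist p (W p (T (p, u)).1 t) ≤ (1 - t) * dist p p + t * dist p (T (p, u)).1 :=
          hW1 p (T (p, u)).1 p t ht
        have h2 : dist p (T (p, u)).1 ≤ D := hD hp (hT1 p hp u)
        have : seq u 0 = p := rfl
        have h3 : seq u 1 = W p (T (p, u)).1 t := rfl
        rw [this, h3, pow_zero, one_mul]
        simp only [dist_self, mul_zero, zero_add] at h1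
        nlinarith [dist_nonneg (x := p) (y := (T (p, u)).1)]
      | succ n ih =>
        have h1 : dist (seq u (n+1)) (seq u (n+2)) ≤
            (1 - t) * dist p p + t * dist (T (seq u n, u)).1 (T (seq u (n+1), u)).1 :=
          hW4 p p (T (seq u n, u)).1 (T (seq u (n+1), u)).1 t ht
        have h2 : dist (T (seq u n, u)).1 (T (seq u (n+1), u)).1 ≤
            dist (T (seq u n, u)) (T (seq u (n+1), u)) := dist_fst_le' _ _
        have h3 : dist (T (seq u n, u)) (T (seq u (n+1), u)) ≤
            dist ((seq u n, u) : X × M) (seq u (n+1), u) := hT2 _ _ (memC u n) (memC u (n+1))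
        have h4 : dist ((seq u n, u) : X × M) (seq u (n+1), u) = dist (seq u n) (seq u (n+1)) := by
          rw [Prod.dist_eq, dist_self]; exact max_eq_left dist_nonneg
        have hpow : (0:ℝ) ≤ t ^ n := pow_nonneg ht0 n
        simp only [dist_self, mul_zero, zero_add] at h1
        have : dist (seq u (n+1)) (seq u (n+2)) ≤ t * (t ^ n * D) := by
          rw [← h4] at ih
          nlinarith [dist_nonneg (x := (T (seq u n, u)).1) (y := (T (seq u (n+1), u)).1),
            dist_nonneg (x := seq u n) (y := seq u (n+1)), h4 ▸ ih]
        calc dist (seq u (n+1)) (seq u (n+2)) ≤ t * (t ^ n * D) := this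
          _ = t ^ (n+1) * D := by ring
    -- choose n with t^n small
    have htend : Filter.Tendsto (fun n => t ^ n) Filter.atTop (nhds 0) :=
      tendsto_pow_atTop_nhds_zero_of_lt_one ht0 ht1
    obtain ⟨n, hn⟩ := (htend.eventually (gt_mem_nhds (show (0:ℝ) < ε / (2 * (D + 1)) by positivity))).exists
    -- the nonexpansive map on M
    set S : M → M := fun u => (T (seq u n, u)).2 with hS
    have hSne : ∀ u v : M, dist (S u) (S v) ≤ dist u v := by
      intro u v
      have h2 : dist (S u) (S v) ≤ dist (T (seq u n, u)) (T (seq v n, v)) := dist_snd_le' _ _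
      have h3 : dist (T (seq u n, u)) (T (seq v n, v)) ≤ dist ((seq u n, u) : X × M) (seq v n, v) :=
        hT2 _ _ (memC u n) (memC v n)
      have h4 : dist ((seq u n, u) : X × M) (seq v n, v) ≤ dist u v := by
        rw [Prod.dist_eq]; exact max_le (lip n u v) le_rfl
      linarith
    have hBinf := hM S hSne
    have hBne : {r : ℝ | ∃ u : M, r = dist u (S u)}.Nonempty :=
      ⟨_, Classical.arbitrary M, rfl⟩
    obtain ⟨r, ⟨u, hru⟩, hrlt⟩ := Real.lt_sInf_add_pos hBne (half_pos hε)
    rw [hBinf, zero_add] at hrlt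
    -- the candidate point
    refine ⟨dist ((seq u n, u) : X × M) (T (seq u n, u)), ⟨seq u n, memC u n, u, rfl⟩, ?_⟩
    rw [Prod.dist_eq]
    have hx : (T ((seq u n : X), u)).1 ∈ C := hT1 _ (memC u n) u
    -- first coordinate bound
    have hW' : dist (T (seq u n, u)).1 (W p (T (seq u n, u)).1 t) ≤
        (1 - t) * dist (T (seq u n, u)).1 p + t * dist (T (seq u n, u)).1 (T (seq u n, u)).1 :=
      hW1 p (T (seq u n, u)).1 (T (seq u n, u)).1 t ht
    simp only [dist_self, mul_zero, add_zero] at hW'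
    have hWD : dist (T (seq u n, u)).1 p ≤ D := hD hx hp
    have hseqnext : seq u (n+1) = W p (T (seq u n, u)).1 t := rfl
    have hfst : dist (seq u n) (T (seq u n, u)).1 ≤ ε := by
      have htri : dist (seq u n) (T (seq u n, u)).1 ≤
          dist (seq u n) (seq u (n+1)) + dist (seq u (n+1)) (T (seq u n, u)).1 :=
        dist_triangle _ _ _
      have hstep := step u n
      have h2 : dist (seq u (n+1)) (T (seq u n, u)).1 ≤ (1 - t) * D := by
        rw [hseqnext, dist_comm]
        have : (1 - t) * dist (T (seq u n, u)).1 p ≤ (1 - t) * D := by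
          apply mul_le_mul_of_nonneg_left hWD; linarith
        linarith
      have hδD : (1 - t) * D ≤ ε / 2 := by
        have h1 : (1 - t) = δ := by simp [htdef]
        rw [h1]
        have : δ * D ≤ ε / (2 * (D + 1)) * D := mul_le_mul_of_nonneg_right hδle hD0
        have h2' : ε / (2 * (D + 1)) * D ≤ ε / 2 := by
          rw [div_mul_eq_mul_div, div_le_div_iff₀ (by positivity) (by norm_num)]
          nlinarith
        linarith
      have hpD : t ^ n * D ≤ ε / 2 := by
        have : t ^ n * D ≤ ε / (2 * (D + 1)) * D :=
          mul_le_mul_of_nonneg_right (le_of_lt hn) hD0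
        have h2' : ε / (2 * (D + 1)) * D ≤ ε / 2 := by
          rw [div_mul_eq_mul_div, div_le_div_iff₀ (by positivity) (by norm_num)]
          nlinarith
        linarith
      nlinarith [htri, hstep, h2, hδD, hpD]
    apply max_le hfst
    rw [hru] at hrlt
    have : dist ((seq u n, u) : X × M).2 (T (seq u n, u)).2 = dist u (S u) := rfl
    rw [this]
    linarith
  have h1 : (0:ℝ) ≤ sInf A := le_csInf hAne hAbd
  have h2 : sInf A ≤ 0 := by
    refine le_of_forall_pos_le_add ?_
    intro ε hε
    obtain ⟨r, hr, hrε⟩ := key ε hε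
    calc sInf A ≤ r := csInf_le hbdd hr
      _ ≤ 0 + ε := by linarith
  linarith
end

section
/- Let (X,ρ,W) be a hyperbolic space, (M,d) a metric space with the AFPP for nonexpansive mappings, (C_u)_{u∈M} a family of nonempty bounded convex subsets of X with diam(C_u) ≤ b for all u ∈ M and some fixed b > 0, and δ : M → ⋃_u C_u a nonexpansive selection (δ(u) ∈ C_u). Let H = {(x,u) : u ∈ M, x ∈ C_u} with the max metric. Then every nonexpansive T : H → H with P_1(T(x,u)) ∈ C_u for all (x,u) ∈ H satisfies inf{d_∞(h, T(h)) : h ∈ H} = 0. -/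
open Metric Set

/-- Iteration of the contraction x ↦ W (δ u) ((T (x,u)).1) t starting at δ u. -/
def iterSeq {X M : Type*} (W : X → X → ℝ → X) (T : X × M → X × M)
    (δ : M → X) (t : ℝ) (u : M) : ℕ → X
  | 0 => δ u
  | n + 1 => W (δ u) (T (iterSeq W T δ t u n, u)).1 t

/-- For a family of uniformly bounded convex sets (C_u), the space
H = {(x,u) : x ∈ C_u} has the AFPP for nonexpansive T with P₁(T(x,u)) ∈ C_u. -/
theorem family_bounded_AFPP {X M : Type*} [MetricSpace X] [MetricSpace M] [Nonempty M]
    (W : X → X → ℝ → X)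
    (hW1 : ∀ x y z : X, ∀ l ∈ Set.Icc (0:ℝ) 1,
      dist z (W x y l) ≤ (1 - l) * dist z x + l * dist z y)
    (hW2 : ∀ x y : X, ∀ l ∈ Set.Icc (0:ℝ) 1, ∀ l' ∈ Set.Icc (0:ℝ) 1,
      dist (W x y l) (W x y l') = |l - l'| * dist x y)
    (hW3 : ∀ x y : X, ∀ l ∈ Set.Icc (0:ℝ) 1, W x y l = W y x (1 - l))
    (hW4 : ∀ x y z w : X, ∀ l ∈ Set.Icc (0:ℝ) 1,
      dist (W x z l) (W y w l) ≤ (1 - l) * dist x y + l * dist z w)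
    (C : M → Set X) (hC : ∀ u, (C u).Nonempty)
    (hconv : ∀ u : M, ∀ x ∈ C u, ∀ y ∈ C u, ∀ l ∈ Set.Icc (0:ℝ) 1, W x y l ∈ C u)
    (hM : AFPP M)
    (b : ℝ) (hb : 0 < b)
    (hdiam : ∀ u : M, ∀ x ∈ C u, ∀ y ∈ C u, dist x y ≤ b)
    (δ : M → X) (hδC : ∀ u, δ u ∈ C u)
    (hδne : ∀ u v : M, dist (δ u) (δ v) ≤ dist u v) :
    ∀ T : X × M → X × M,
      (∀ x : X, ∀ u : M, x ∈ C u → (T (x, u)).1 ∈ C (T (x, u)).2) →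
      (∀ x : X, ∀ u : M, x ∈ C u → (T (x, u)).1 ∈ C u) →
      (∀ p q : X × M, p.1 ∈ C p.2 → q.1 ∈ C q.2 → dist (T p) (T q) ≤ dist p q) →
      sInf {r : ℝ | ∃ x : X, ∃ u : M, x ∈ C u ∧ r = dist (x, u) (T (x, u))} = 0 := by
  intro T hTC hTCu hTne
  set A := {r : ℝ | ∃ x : X, ∃ u : M, x ∈ C u ∧ r = dist (x, u) (T (x, u))} with hA
  have hfst : ∀ p q : X × M, dist p.1 q.1 ≤ dist p q := fun p q => by
    rw [Prod.dist_eq]; exact le_max_left _ _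
  have hsnd : ∀ p q : X × M, dist p.2 q.2 ≤ dist p q := fun p q => by
    rw [Prod.dist_eq]; exact le_max_right _ _
  obtain ⟨u₀⟩ := ‹Nonempty M›
  have hAne : A.Nonempty := ⟨_, δ u₀, u₀, hδC u₀, rfl⟩
  have hAnn : ∀ r ∈ A, (0:ℝ) ≤ r := by rintro r ⟨x, u, hx, rfl⟩; exact dist_nonneg
  have hbdd : BddBelow A := ⟨0, fun r hr => hAnn r hr⟩
  have key : ∀ ε > (0:ℝ), ∃ r ∈ A, r < ε := by
    intro ε hε
    set m := min 1 (ε / 2 / b) with hm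
    have hm0 : 0 < m := lt_min one_pos (by positivity)
    have hm1 : m ≤ 1 := min_le_left _ _
    set t := 1 - m with htdef
    have ht0 : (0:ℝ) ≤ t := by simp only [htdef]; linarith
    have ht1 : t ≤ 1 := by simp only [htdef]; linarith
    have htlt : t < 1 := by simp only [htdef]; linarith
    have ht : t ∈ Set.Icc (0:ℝ) 1 := ⟨ht0, ht1⟩
    have hmb : (1 - t) * b ≤ ε / 2 := by
      have h1 : m ≤ ε / 2 / b := min_le_right _ _
      have h2 : m * b ≤ (ε / 2 / b) * b := by nlinarith
      have h3 : (ε / 2 / b) * b = ε / 2 := div_mul_cancel₀ _ (ne_of_gt hb)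
      simp only [htdef]; linarith
    obtain ⟨n, hn⟩ := exists_pow_lt_of_lt_one (show (0:ℝ) < ε / 2 / b by positivity) htlt
    have htn : t ^ n * b < ε / 2 := by
      have := (lt_div_iff₀ hb).mp hn
      linarith
    have htnn : ∀ k, (0:ℝ) ≤ t ^ k := fun k => pow_nonneg ht0 k
    set z : M → ℕ → X := fun u => iterSeq W T δ t u with hz
    have hzsucc : ∀ u k, z u (k + 1) = W (δ u) (T (z u k, u)).1 t := fun u k => rfl
    have hz0 : ∀ u, z u 0 = δ u := fun u => rfl
    have hmem : ∀ u k, z u k ∈ C u := by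
      intro u k
      induction k with
      | zero => exact hδC u
      | succ k ih =>
        rw [hzsucc]
        exact hconv u (δ u) (hδC u) _ (hTCu _ u ih) t ht
    -- gap estimate
    have hgap : ∀ u k, dist (z u k) (z u (k + 1)) ≤ t ^ k * b := by
      intro u k
      induction k with
      | zero =>
        rw [hz0, hzsucc, hz0]
        have h1 := hW1 (δ u) (T (δ u, u)).1 (δ u) t ht
        rw [dist_self] at h1
        have h2 : dist (δ u) (T (δ u, u)).1 ≤ b :=
          hdiam u _ (hδC u) _ (hTCu _ u (hδC u))
        simp only [pow_zero, one_mul]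
        nlinarith
      | succ k ih =>
        rw [hzsucc, hzsucc]
        have h4 := hW4 (δ u) (δ u) (T (z u k, u)).1 (T (z u (k+1), u)).1 t ht
        rw [dist_self] at h4
        have hT := hTne (z u k, u) (z u (k+1), u) (hmem u k) (hmem u (k+1))
        have hp : dist ((z u k, u) : X × M) ((z u (k+1), u) : X × M)
            = dist (z u k) (z u (k+1)) := by
          rw [Prod.dist_eq, dist_self]
          exact max_eq_left dist_nonneg
        have h5 : dist (T (z u k, u)).1 (T (z u (k+1), u)).1 ≤ dist (z u k) (z u (k+1)) :=
          le_trans (hfst _ _) (by rw [hp] at hT; exact hT)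
        have hps : t ^ (k+1) * b = t * (t ^ k * b) := by ring
        rw [hps]
        nlinarith
    -- approximate fixed point estimate in the fiber
    have hafp : ∀ u k, dist (z u k) (T (z u k, u)).1 ≤ t ^ k * b + (1 - t) * b := by
      intro u k
      have h1 := hgap u k
      have h2 := hW1 (δ u) (T (z u k, u)).1 (T (z u k, u)).1 t ht
      rw [dist_self] at h2
      have h3 : dist (T (z u k, u)).1 (δ u) ≤ b :=
        hdiam u _ (hTCu _ u (hmem u k)) _ (hδC u)
      have h4 := dist_triangle (z u k) (z u (k+1)) (T (z u k, u)).1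
      rw [hzsucc] at h4
      have h5 : dist (W (δ u) (T (z u k, u)).1 t) (T (z u k, u)).1
          ≤ (1 - t) * b := by
        rw [dist_comm]
        nlinarith
      rw [hzsucc] at h1
      linarith
    -- z is nonexpansive in u
    have hzne : ∀ k u v, dist (z u k) (z v k) ≤ dist u v := by
      intro k
      induction k with
      | zero => intro u v; rw [hz0, hz0]; exact hδne u v
      | succ k ih =>
        intro u v
        rw [hzsucc, hzsucc]
        have h4 := hW4 (δ u) (δ v) (T (z u k, u)).1 (T (z v k, v)).1 t ht
        have hT := hTne (z u k, u) (z v k, v) (hmem u k) (hmem v k)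
        have hp : dist ((z u k, u) : X × M) ((z v k, v) : X × M)
            = max (dist (z u k) (z v k)) (dist u v) := Prod.dist_eq
        have h5 : dist (T (z u k, u)).1 (T (z v k, v)).1 ≤ dist u v := by
          refine le_trans (hfst _ _) (le_trans hT ?_)
          rw [hp]
          exact max_le (ih u v) le_rfl
        have h6 := hδne u v
        nlinarith [(dist_nonneg : (0:ℝ) ≤ dist u v)]
    -- the induced map on M
    set S : M → M := fun u => (T (z u n, u)).2 with hS
    have hSne : ∀ u v, dist (S u) (S v) ≤ dist u v := by
      intro u v
      have hT := hTne (z u n, u) (z v n, v) (hmem u n) (hmem v n)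
      have hp : dist ((z u n, u) : X × M) ((z v n, v) : X × M)
          = max (dist (z u n) (z v n)) (dist u v) := Prod.dist_eq
      refine le_trans (hsnd _ _) (le_trans hT ?_)
      rw [hp]
      exact max_le (hzne n u v) le_rfl
    have hMS := hM S hSne
    -- find u with dist u (S u) < ε
    have hex : ∃ u : M, dist u (S u) < ε := by
      by_contra h
      push_neg at h
      have : ε ≤ sInf {r : ℝ | ∃ u : M, r = dist u (S u)} :=
        le_csInf ⟨dist u₀ (S u₀), u₀, rfl⟩ (by rintro r ⟨u, rfl⟩; exact h u)
      rw [hMS] at this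
      linarith
    obtain ⟨u, hu⟩ := hex
    refine ⟨dist ((z u n, u) : X × M) (T (z u n, u)), ⟨z u n, u, hmem u n, rfl⟩, ?_⟩
    rw [Prod.dist_eq]
    apply max_lt
    · show dist (z u n) (T (z u n, u)).1 < ε
      have h1 := hafp u n
      have h2 : t ^ n * b + (1 - t) * b < ε := by clear_value S z t m; linarith
      exact lt_of_le_of_lt h1 h2
    · show dist u (T (z u n, u)).2 < ε
      exact hu
  refine le_antisymm ?_ (Real.sInf_nonneg hAnn)
  by_contra h
  push_neg at h
  obtain ⟨r, hr, hrlt⟩ := key (sInf A) h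
  exact absurd (csInf_le hbdd hr) (not_le.mpr hrlt)
end
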